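/- For α > 0 and 0 < σ ≤ t, the kernel k(t,σ) = q(σ)·sinh²(ασ)·(coth(αt) − coth(ασ))/α satisfies |k(t,σ)| ≤ |q(σ)|/(2α). -/
import Mathlib


/-- The hyperbolic cotangent `coth x = cosh x / sinh x`. -/
noncomputable def coth (x : ℝ) : ℝ := Real.cosh x / Real.sinh x

/-- For `α > 0` and `0 < σ ≤ t`, the kernel
`k(t,σ) = q(σ)·sinh²(ασ)·(coth(αt) − coth(ασ))/α` satisfies `|k(t,σ)| ≤ |q(σ)|/(2α)`. -/
theorem stmt_7 (q : ℝ → ℝ) (α : ℝ) (hα : 0 < α) (σ t : ℝ)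
    (hσ : 0 < σ) (hσt : σ ≤ t) :
    |q σ * (Real.sinh (α * σ)) ^ 2 * (coth (α * t) - coth (α * σ)) / α|
      ≤ |q σ| / (2 * α) := by
  have ha : 0 < α * σ := mul_pos hα hσ
  have hab : α * σ ≤ α * t := by nlinarith
  have hsa : 0 < Real.sinh (α * σ) := Real.sinh_pos_iff.mpr ha
  have hsb : 0 < Real.sinh (α * t) := Real.sinh_pos_iff.mpr (lt_of_lt_of_le ha hab)
  have hsd : 0 ≤ Real.sinh (α * t - α * σ) := Real.sinh_nonneg_iff.mpr (by linarith)
  have hD : coth (α * t) - coth (α * σ)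
      = -(Real.sinh (α * t - α * σ)) / (Real.sinh (α * σ) * Real.sinh (α * t)) := by
    unfold coth
    rw [Real.sinh_sub, eq_div_iff (mul_pos hsa hsb).ne']
    field_simp [hsa.ne', hsb.ne']
    ring_nf
  have h1 : Real.sinh (α * t) = Real.sinh (α * σ) * Real.cosh (α * t - α * σ)
      + Real.cosh (α * σ) * Real.sinh (α * t - α * σ) := by
    rw [← Real.sinh_add]; ring_nf
  have h2 : Real.sinh (α * t - α * σ) ≤ Real.cosh (α * t - α * σ) :=
    le_of_lt (Real.sinh_lt_cosh _)
  have h3 : Real.sinh (α * σ) ≤ Real.cosh (α * σ) := le_of_lt (Real.sinh_lt_cosh _)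
  have hkey : 2 * (Real.sinh (α * σ) * Real.sinh (α * t - α * σ)) ≤ Real.sinh (α * t) := by
    nlinarith
  have heq : q σ * (Real.sinh (α * σ)) ^ 2 * (coth (α * t) - coth (α * σ)) / α
      = -(q σ * (Real.sinh (α * σ) * Real.sinh (α * t - α * σ) / Real.sinh (α * t)) / α) := by
    rw [hD]; field_simp [hα.ne', hsa.ne', hsb.ne']
  rw [heq, abs_neg, abs_div, abs_of_pos hα, abs_mul]
  have hr : |Real.sinh (α * σ) * Real.sinh (α * t - α * σ) / Real.sinh (α * t)| ≤ 1 / 2 := by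
    rw [abs_of_nonneg (div_nonneg (by positivity) hsb.le), div_le_iff₀ hsb]
    nlinarith
  calc |q σ| * |Real.sinh (α * σ) * Real.sinh (α * t - α * σ) / Real.sinh (α * t)| / α
      ≤ |q σ| * (1 / 2) / α := by gcongr
    _ = |q σ| / (2 * α) := by ring
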